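/- arXiv:2111.04023 — 5 statements merged into one kernel-verified Lean document; each statement's English description precedes it below -/
import Mathlib

section
/- Let k be a commutative ring, let d ≥ 1, and let β ∈ ℤ^d be nonzero. For a finitely supported function f : ℤ^d → k, regarded as the element Σ_μ f(μ) x^μ of the group algebra k[ℤ^d], the following are equivalent: (i) f lies in the ideal of k[ℤ^d] generated by x^β − 1; (ii) for every ν ∈ ℤ^d, the (finite) sum Σ_{n ∈ ℤ} f(ν + nβ) equals 0, i.e. the sum of the coefficients of f along every coset of ℤβ vanishes. -/
open Set Function

/-- Let `k` be a commutative ring, `d ≥ 1` and `β ∈ ℤ^d` nonzero.  A finitely supported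
function `f : ℤ^d → k`, regarded as the element `Σ_μ f(μ) x^μ` of the group algebra
`k[ℤ^d]`, lies in the ideal generated by `x^β - 1` if and only if for every `ν ∈ ℤ^d`
the sum of the coefficients of `f` along the coset `ν + ℤβ` vanishes. -/
theorem stmt1 (k : Type*) [CommRing k] (d : ℕ) (hd : 1 ≤ d)
    (β : Fin d → ℤ) (hβ : β ≠ 0)
    (f : AddMonoidAlgebra k (Fin d → ℤ)) :
    f ∈ Ideal.span {AddMonoidAlgebra.of' k (Fin d → ℤ) β - 1} ↔
      ∀ ν : Fin d → ℤ, ∑ᶠ n : ℤ, f.coeff (ν + n • β) = 0 := by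
  classical
  set L : (Fin d → ℤ) → ℤ := fun μ => ∑ i, β i * μ i with hL
  have hLadd : ∀ μ ν, L (μ + ν) = L μ + L ν := by
    intro μ ν; simp [hL, Pi.add_apply, mul_add, Finset.sum_add_distrib]
  have hLsmul : ∀ (n : ℤ) (μ : Fin d → ℤ), L (n • μ) = n * L μ := by
    intro n μ
    simp only [hL, Pi.smul_apply, smul_eq_mul, Finset.mul_sum]
    exact Finset.sum_congr rfl fun i _ => by ring
  have hLβ : 0 < L β := by
    obtain ⟨i, hi⟩ : ∃ i, β i ≠ 0 := by
      by_contra h; push_neg at h; exact hβ (funext h)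
    exact Finset.sum_pos' (fun j _ => mul_self_nonneg _)
      ⟨i, Finset.mem_univ i, mul_self_pos.mpr hi⟩
  have hinj : ∀ ν : Fin d → ℤ, Function.Injective (fun n : ℤ => ν + n • β) := by
    intro ν n m h
    have h2 := congrArg L h
    simp only [hLadd, hLsmul] at h2
    nlinarith [h2, hLβ]
  have hfin : ∀ (g : AddMonoidAlgebra k (Fin d → ℤ)) (ν : Fin d → ℤ),
      (Function.support fun n : ℤ => g.coeff (ν + n • β)).Finite := by
    intro g ν
    have h : (Function.support fun n : ℤ => g.coeff (ν + n • β))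
        = (fun n : ℤ => ν + n • β) ⁻¹' (Function.support g.coeff) := rfl
    rw [h]
    exact Set.Finite.preimage (hinj ν).injOn g.coeff.finite_support
  have key : ∀ (c : AddMonoidAlgebra k (Fin d → ℤ)) (μ : Fin d → ℤ),
      ((AddMonoidAlgebra.of' k (Fin d → ℤ) β - 1) * c).coeff μ = c.coeff (μ - β) - c.coeff μ := by
    intro c μ
    have h1 : ((AddMonoidAlgebra.of' k (Fin d → ℤ) β - 1) * c).coeff μ
        = (AddMonoidAlgebra.of' k (Fin d → ℤ) β * c).coeff μ - c.coeff μ := by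
      rw [sub_mul, one_mul]; rfl
    rw [h1, AddMonoidAlgebra.of'_apply, AddMonoidAlgebra.coeff_single_mul_apply,
      one_mul, neg_add_eq_sub]
  have hshift : ∀ (n : ℤ) (μ : Fin d → ℤ), μ + n • β - β = μ + (n - 1) • β := by
    intro n μ; rw [sub_smul, one_smul]; abel
  constructor
  · intro hmem ν
    obtain ⟨c, hc⟩ := Ideal.mem_span_singleton.mp hmem
    have h1 : ∀ n : ℤ, f.coeff (ν + n • β) = c.coeff (ν + (n - 1) • β) - c.coeff (ν + n • β) := by
      intro n; rw [hc, key, hshift]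
    have hfin1 : (Function.support fun n : ℤ => c.coeff (ν + (n - 1) • β)).Finite := by
      have h : (Function.support fun n : ℤ => c.coeff (ν + (n - 1) • β))
          = (Equiv.subRight (1 : ℤ)) ⁻¹' (Function.support fun n : ℤ => c.coeff (ν + n • β)) := rfl
      rw [h]; exact (hfin c ν).preimage (Equiv.injective _).injOn
    calc ∑ᶠ n : ℤ, f.coeff (ν + n • β)
        = ∑ᶠ n : ℤ, (c.coeff (ν + (n - 1) • β) - c.coeff (ν + n • β)) := finsum_congr h1
      _ = (∑ᶠ n : ℤ, c.coeff (ν + (n - 1) • β)) - ∑ᶠ n : ℤ, c.coeff (ν + n • β) :=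
          finsum_sub_distrib hfin1 (hfin c ν)
      _ = 0 := by
          have he := finsum_comp_equiv (Equiv.subRight (1 : ℤ))
            (f := fun n : ℤ => c.coeff (ν + n • β))
          simp only [Equiv.subRight_apply] at he
          rw [he, sub_self]
  · intro hsum
    rw [Ideal.mem_span_singleton]
    rcases eq_or_ne f 0 with rfl | hf0
    · exact dvd_zero _
    have hne : f.coeff.support.Nonempty :=
      Finsupp.support_nonempty_iff.mpr (AddMonoidAlgebra.coeff_eq_zero.not.mpr hf0)
    have hneL : (f.coeff.support.image L).Nonempty := hne.image L
    set M := (f.coeff.support.image L).max' hneL with hM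
    set m0 := (f.coeff.support.image L).min' hneL with hm0
    set F : (Fin d → ℤ) → k := fun μ => ∑ᶠ n ∈ Set.Ici (1 : ℤ), f.coeff (μ + n • β) with hF
    -- split of the total sum
    have hsplit : ∀ μ : Fin d → ℤ,
        (∑ᶠ n ∈ Set.Iic (0 : ℤ), f.coeff (μ + n • β)) + F μ = 0 := by
      intro μ
      rw [hF]
      have hu : Set.Iic (0 : ℤ) ∪ Set.Ici (1 : ℤ) = Set.univ := by
        ext n; simp; omega
      have hd2 : Disjoint (Set.Iic (0 : ℤ)) (Set.Ici (1 : ℤ)) := by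
        rw [Set.disjoint_iff]; intro n hn; simp at hn; omega
      rw [← finsum_mem_union' hd2 ((hfin f μ).inter_of_right _) ((hfin f μ).inter_of_right _),
        hu, finsum_mem_univ]
      exact hsum μ
    -- finiteness of support of F
    have hFsupp : Function.support F ⊆
        ↑((f.coeff.support ×ˢ Finset.Icc (1 : ℤ) (M - m0)).image fun p => p.1 - p.2 • β) := by
      intro μ hμ
      have hA : ∃ n : ℤ, 1 ≤ n ∧ f.coeff (μ + n • β) ≠ 0 := by
        by_contra h; push_neg at h
        exact hμ (finsum_mem_of_eqOn_zero fun n hn => h n hn)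
      have hB : ∃ m : ℤ, m ≤ 0 ∧ f.coeff (μ + m • β) ≠ 0 := by
        by_contra h; push_neg at h
        have : (∑ᶠ n ∈ Set.Iic (0 : ℤ), f.coeff (μ + n • β)) = 0 :=
          finsum_mem_of_eqOn_zero fun n hn => h n hn
        have h2 := hsplit μ
        rw [this, zero_add] at h2
        exact hμ h2
      obtain ⟨n, hn1, hn2⟩ := hA
      obtain ⟨m, hm1, hm2⟩ := hB
      have hσ : μ + n • β ∈ f.coeff.support := Finsupp.mem_support_iff.mpr hn2
      have hτ : μ + m • β ∈ f.coeff.support := Finsupp.mem_support_iff.mpr hm2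
      have hσL : L (μ + n • β) ≤ M := Finset.le_max' _ _ (Finset.mem_image_of_mem L hσ)
      have hτL : m0 ≤ L (μ + m • β) := Finset.min'_le _ _ (Finset.mem_image_of_mem L hτ)
      rw [hLadd, hLsmul] at hσL hτL
      simp only [Finset.coe_image, Set.mem_image, Finset.mem_coe, Finset.mem_product]
      refine ⟨(μ + n • β, n), ?_, by show μ + n • β - n • β = μ; abel⟩
      simp only [Finset.mem_product, Finset.mem_Icc]
      refine ⟨hσ, hn1, ?_⟩
      nlinarith [hLβ, hσL, hτL, hn1, hm1,
        mul_nonneg (by linarith : (0:ℤ) ≤ n) (by linarith : (0:ℤ) ≤ L β - 1),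
        mul_nonneg (by linarith : (0:ℤ) ≤ -m) hLβ.le]
    have hFfin : (Function.support F).Finite :=
      Set.Finite.subset (Finset.finite_toSet _) hFsupp
    refine ⟨AddMonoidAlgebra.ofCoeff (Finsupp.ofSupportFinite F hFfin), ?_⟩
    ext μ
    rw [key]
    have hc : ∀ τ, (AddMonoidAlgebra.ofCoeff (Finsupp.ofSupportFinite F hFfin)).coeff τ = F τ := fun τ =>
      congrFun Finsupp.ofSupportFinite_coe τ
    rw [hc, hc]
    -- F (μ - β) = ∑ᶠ n ∈ Ici 0, f.coeff (μ + n • β)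
    have h1 : F (μ - β) = ∑ᶠ n ∈ Set.Ici (0 : ℤ), f.coeff (μ + n • β) := by
      have himg : Set.Ici (1 : ℤ) = (fun n : ℤ => n + 1) '' Set.Ici (0 : ℤ) := by
        ext n; constructor
        · intro hn; exact ⟨n - 1, by simpa using hn, by ring⟩
        · rintro ⟨m, hm, rfl⟩; simp at hm ⊢; omega
      have e1 : F (μ - β) = ∑ᶠ n ∈ Set.Ici (1 : ℤ), f.coeff (μ - β + n • β) := rfl
      rw [e1, himg, finsum_mem_image (fun a _ b _ h => by omega)]
      apply finsum_mem_congr rfl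
      intro n _
      congr 1
      rw [add_smul, one_smul]; abel
    rw [h1]
    have h2 : (∑ᶠ n ∈ Set.Ici (0 : ℤ), f.coeff (μ + n • β))
        = f.coeff (μ + (0 : ℤ) • β) + ∑ᶠ n ∈ Set.Ici (1 : ℤ), f.coeff (μ + n • β) := by
      have hins : Set.Ici (0 : ℤ) = insert (0 : ℤ) (Set.Ici 1) := by
        ext n; simp; omega
      rw [hins, finsum_mem_insert' _ (by simp) ((hfin f μ).inter_of_right _)]
    rw [h2, hF]
    simp
end

section
/- Let k be a field of characteristic 0, let d ≥ 1, let B : ℤ^d × ℤ^d → ℤ be a bilinear form, and let α ∈ ℤ^d be nonzero with B(α, α) = 0. Let f : ℤ^d → k be a finitely supported function such that whenever μ, μ′ lie in the support of f and μ − μ′ ∈ ℤα, then in fact μ − μ′ ∈ 2ℤα. Set D_α f = Σ_μ B(μ, α) · f(μ) · x^μ ∈ k[ℤ^d]. Then D_α f lies in the ideal of k[ℤ^d] generated by x^{2α} − 1 if and only if for every ν ∈ ℤ^d with B(ν, α) ≠ 0 one has Σ_{n ∈ ℤ} f(ν + nα) = 0. -/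
open AddMonoidAlgebra

noncomputable section StmtAux

variable {k : Type*} [Field k] {d : ℕ}

open Classical in
/-- Sum of coefficients over the coset `ν + ℤβ`. -/
noncomputable def Lmap (β ν : Fin d → ℤ) (u : AddMonoidAlgebra k (Fin d → ℤ)) : k :=
  ∑ μ ∈ u.coeff.support, if ∃ m : ℤ, μ = ν + m • β then u.coeff μ else 0

open Classical in
lemma Lmap_apply_eq_sum (β ν : Fin d → ℤ) (u : AddMonoidAlgebra k (Fin d → ℤ))
    {s : Finset (Fin d → ℤ)} (hs : u.coeff.support ⊆ s) :
    Lmap β ν u = ∑ μ ∈ s, if ∃ m : ℤ, μ = ν + m • β then u.coeff μ else 0 := by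
  refine Finset.sum_subset hs fun μ _ hμ => ?_
  rw [Finsupp.notMem_support_iff.mp hμ, ite_self]

open Classical in
lemma Lmap_single (β ν μ : Fin d → ℤ) (c : k) :
    Lmap β ν (AddMonoidAlgebra.single μ c) = if ∃ m : ℤ, μ = ν + m • β then c else 0 := by
  by_cases hc : c = 0
  · simp [hc, Lmap, ite_self]
  · rw [Lmap_apply_eq_sum β ν (AddMonoidAlgebra.single μ c) (Finsupp.support_single_subset), Finset.sum_singleton,
      AddMonoidAlgebra.coeff_single, Finsupp.single_eq_same]

open Classical in
lemma Lmap_add (β ν : Fin d → ℤ) (u v : AddMonoidAlgebra k (Fin d → ℤ)) :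
    Lmap β ν (u + v) = Lmap β ν u + Lmap β ν v := by
  rw [Lmap_apply_eq_sum β ν (u + v) (Finsupp.support_add),
    Lmap_apply_eq_sum β ν u (Finset.subset_union_left (s₂ := v.coeff.support)),
    Lmap_apply_eq_sum β ν v (Finset.subset_union_right (s₁ := u.coeff.support)),
    ← Finset.sum_add_distrib]
  refine Finset.sum_congr rfl fun μ _ => ?_
  by_cases h : ∃ m : ℤ, μ = ν + m • β
  · rw [if_pos h, if_pos h, if_pos h]; rfl
  · rw [if_neg h, if_neg h, if_neg h, add_zero]

open Classical in
lemma Lmap_neg (β ν : Fin d → ℤ) (u : AddMonoidAlgebra k (Fin d → ℤ)) :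
    Lmap β ν (-u) = - Lmap β ν u := by
  have h := Lmap_add β ν u (-u)
  rw [add_neg_cancel] at h
  have h0 : Lmap β ν (0 : AddMonoidAlgebra k (Fin d → ℤ)) = 0 := by
    simp [Lmap]
  rw [h0] at h
  exact (neg_eq_of_add_eq_zero_right h.symm).symm

open Classical in
lemma Lmap_sub (β ν : Fin d → ℤ) (u v : AddMonoidAlgebra k (Fin d → ℤ)) :
    Lmap β ν (u - v) = Lmap β ν u - Lmap β ν v := by
  rw [sub_eq_add_neg, Lmap_add, Lmap_neg, sub_eq_add_neg]

open Classical in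
lemma Lmap_eq_filter_sum (β ν : Fin d → ℤ) (u : AddMonoidAlgebra k (Fin d → ℤ)) :
    Lmap β ν u = ∑ μ ∈ u.coeff.support.filter (fun μ => ∃ m : ℤ, μ = ν + m • β), u.coeff μ := by
  rw [Lmap, Finset.sum_filter]

lemma of'_smul_sub_one_mem (β : Fin d → ℤ) (m : ℤ) :
    of' k (Fin d → ℤ) (m • β) - 1 ∈ Ideal.span {of' k (Fin d → ℤ) β - 1} := by
  set I := Ideal.span {of' k (Fin d → ℤ) β - 1} with hI
  set q := Ideal.Quotient.mk I with hq
  have key : ∀ a : ℤ, q (of' k (Fin d → ℤ) (a • β)) = 1 := by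
    have hadd : ∀ a b : ℤ, q (of' k (Fin d → ℤ) ((a + b) • β))
        = q (of' k (Fin d → ℤ) (a • β)) * q (of' k (Fin d → ℤ) (b • β)) := by
      intro a b
      rw [← map_mul]
      congr 1
      simp only [of'_apply, AddMonoidAlgebra.single_mul_single, one_mul, add_smul]
    have h1 : q (of' k (Fin d → ℤ) ((1 : ℤ) • β)) = 1 := by
      rw [one_smul]
      have hmem : of' k (Fin d → ℤ) β - 1 ∈ I := Ideal.subset_span rfl
      have := (Ideal.Quotient.eq (I := I)).mpr hmem
      simpa using this
    have h0 : q (of' k (Fin d → ℤ) ((0 : ℤ) • β)) = 1 := by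
      simp [of'_apply, ← AddMonoidAlgebra.one_def]
    have hnat : ∀ n : ℕ, q (of' k (Fin d → ℤ) ((n : ℤ) • β)) = 1 := by
      intro n
      induction n with
      | zero => simpa using h0
      | succ n ih =>
        rw [show ((n + 1 : ℕ) : ℤ) = (n : ℤ) + 1 by push_cast; ring, hadd, ih, h1, one_mul]
    intro a
    rcases Int.eq_nat_or_neg a with ⟨n, rfl | rfl⟩
    · exact hnat n
    · have := hadd (-(n : ℤ)) (n : ℤ)
      rw [neg_add_cancel, h0, hnat n, mul_one] at this
      exact this.symm
  have hm := key m
  rw [show (1 : (AddMonoidAlgebra k (Fin d → ℤ)) ⧸ I) = q 1 from (map_one q).symm] at hm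
  exact (Ideal.Quotient.eq (I := I)).mp hm

open Classical in
lemma Lmap_mul_gensub (β ν : Fin d → ℤ) (a : AddMonoidAlgebra k (Fin d → ℤ)) :
    Lmap β ν (a * (of' k (Fin d → ℤ) β - 1)) = 0 := by
  induction a using AddMonoidAlgebra.induction with
  | zero => simp [Lmap]
  | single_add μ c v hμ hc ih =>
    rw [add_mul, Lmap_add, ih, add_zero]
    have hmul : AddMonoidAlgebra.single μ c * (of' k (Fin d → ℤ) β - 1)
        = AddMonoidAlgebra.single (μ + β) c - AddMonoidAlgebra.single μ c := by
      rw [mul_sub, mul_one, of'_apply, AddMonoidAlgebra.single_mul_single, mul_one]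
    rw [hmul, Lmap_sub, Lmap_single, Lmap_single]
    have hiff : (∃ m : ℤ, μ + β = ν + m • β) ↔ (∃ m : ℤ, μ = ν + m • β) := by
      constructor
      · rintro ⟨m, hm⟩
        exact ⟨m - 1, by rw [sub_smul, one_smul, ← add_sub_assoc]; exact eq_sub_of_add_eq hm⟩
      · rintro ⟨m, hm⟩
        exact ⟨m + 1, by rw [add_smul, one_smul, hm]; abel⟩
    by_cases h : ∃ m : ℤ, μ = ν + m • β
    · rw [if_pos h, if_pos (hiff.mpr h), sub_self]
    · rw [if_neg h, if_neg (fun hc' => h (hiff.mp hc')), sub_self]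

lemma Lmap_eq_zero_of_mem (β ν : Fin d → ℤ) (u : AddMonoidAlgebra k (Fin d → ℤ))
    (hu : u ∈ Ideal.span {of' k (Fin d → ℤ) β - 1}) : Lmap β ν u = 0 := by
  obtain ⟨a, rfl⟩ := Ideal.mem_span_singleton'.mp hu
  exact Lmap_mul_gensub β ν a

open Classical in
lemma mem_of_Lmap_eq_zero (β : Fin d → ℤ) (u : AddMonoidAlgebra k (Fin d → ℤ))
    (h : ∀ ν, Lmap β ν u = 0) : u ∈ Ideal.span {of' k (Fin d → ℤ) β - 1} := by
  suffices H : ∀ (n : ℕ) (u : AddMonoidAlgebra k (Fin d → ℤ)), u.coeff.support.card ≤ n →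
      (∀ ν, Lmap β ν u = 0) → u ∈ Ideal.span {of' k (Fin d → ℤ) β - 1} from
    H u.coeff.support.card u le_rfl h
  intro n
  induction n with
  | zero =>
    intro u hcard _
    have h0 : u = 0 := AddMonoidAlgebra.coeff_eq_zero.mp (Finsupp.support_eq_empty.mp (Finset.card_eq_zero.mp (Nat.le_zero.mp hcard)))
    rw [h0]; exact Ideal.zero_mem _
  | succ n ih =>
    intro u hcard hu
    by_cases h0 : u = 0
    · rw [h0]; exact Ideal.zero_mem _
    obtain ⟨μ₀, hμ₀⟩ := Finsupp.support_nonempty_iff.mpr (mt AddMonoidAlgebra.coeff_eq_zero.mp h0)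
    have hex : ∃ μ₁ ∈ u.coeff.support, μ₁ ≠ μ₀ ∧ (∃ m : ℤ, μ₁ = μ₀ + m • β) := by
      by_contra hcon
      push_neg at hcon
      have hsum : Lmap β μ₀ u = u.coeff μ₀ := by
        rw [Lmap]
        refine (Finset.sum_eq_single_of_mem μ₀ hμ₀ fun μ hμ hne => ?_).trans ?_
        · rw [if_neg]
          rintro ⟨mm, hP⟩
          exact hcon μ hμ hne mm hP
        · rw [if_pos ⟨0, by simp⟩]
      rw [hu μ₀] at hsum
      exact Finsupp.mem_support_iff.mp hμ₀ hsum.symm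
    obtain ⟨μ₁, hμ₁, hne, m, hm⟩ := hex
    set c := u.coeff μ₁ with hc
    set v := AddMonoidAlgebra.single μ₀ c * (of' k (Fin d → ℤ) (m • β) - 1) with hv
    have hveq : v = AddMonoidAlgebra.single μ₁ c - AddMonoidAlgebra.single μ₀ c := by
      rw [hv, mul_sub, mul_one, of'_apply, AddMonoidAlgebra.single_mul_single, mul_one, ← hm]
    have hvI : v ∈ Ideal.span {of' k (Fin d → ℤ) β - 1} :=
      Ideal.mul_mem_left _ _ (of'_smul_sub_one_mem β m)
    have hLv : ∀ ν, Lmap β ν v = 0 := by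
      intro ν
      rw [hveq, Lmap_sub, Lmap_single, Lmap_single]
      have hiff : (∃ j : ℤ, μ₁ = ν + j • β) ↔ (∃ j : ℤ, μ₀ = ν + j • β) := by
        constructor
        · rintro ⟨j, hj⟩
          refine ⟨j - m, ?_⟩
          have : μ₀ = μ₁ - m • β := by rw [hm]; abel
          rw [this, hj, sub_smul]; abel
        · rintro ⟨j, hj⟩
          exact ⟨j + m, by rw [hm, hj, add_smul]; abel⟩
      by_cases hP : ∃ j : ℤ, μ₁ = ν + j • β
      · rw [if_pos hP, if_pos (hiff.mp hP), sub_self]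
      · rw [if_neg hP, if_neg (fun hq => hP (hiff.mpr hq)), sub_self]
    have hLu' : ∀ ν, Lmap β ν (u - v) = 0 := fun ν => by
      rw [Lmap_sub, hu ν, hLv ν, sub_zero]
    have hsub : (u - v).coeff.support ⊆ u.coeff.support.erase μ₁ := by
      intro μ hμ
      rw [Finsupp.mem_support_iff] at hμ
      rw [Finset.mem_erase]
      by_contra hcon
      push_neg at hcon
      apply hμ
      by_cases hμeq : μ = μ₁
      · subst hμeq
        rw [AddMonoidAlgebra.coeff_sub, Finsupp.sub_apply, hveq, AddMonoidAlgebra.coeff_sub,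
          Finsupp.sub_apply, AddMonoidAlgebra.coeff_single, AddMonoidAlgebra.coeff_single,
          Finsupp.single_eq_same,
          Finsupp.single_eq_of_ne' (fun hq => hne hq.symm), ← hc]
        ring
      · have hnotmem := hcon hμeq
        rw [AddMonoidAlgebra.coeff_sub, Finsupp.sub_apply, hveq, AddMonoidAlgebra.coeff_sub,
          Finsupp.sub_apply, AddMonoidAlgebra.coeff_single, AddMonoidAlgebra.coeff_single,
          Finsupp.single_eq_of_ne' (fun hq => hμeq hq.symm),
          Finsupp.single_eq_of_ne' (fun hq : μ₀ = μ => by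
            rw [← hq] at hnotmem; exact hnotmem hμ₀),
          Finsupp.notMem_support_iff.mp hnotmem]
        ring
    have hcard' : (u - v).coeff.support.card ≤ n := by
      have h1 := Finset.card_le_card hsub
      rw [Finset.card_erase_of_mem hμ₁] at h1
      omega
    have huv := ih (u - v) hcard' hLu'
    have := Ideal.add_mem _ huv hvI
    rwa [sub_add_cancel] at this

open Classical in
lemma finsum_coset_split (α : Fin d → ℤ) (hα : α ≠ 0) (f : AddMonoidAlgebra k (Fin d → ℤ))
    (ν : Fin d → ℤ) :
    ∑ᶠ n : ℤ, f.coeff (ν + n • α)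
      = Lmap ((2:ℤ) • α) ν f + Lmap ((2:ℤ) • α) (ν + α) f := by
  set β : Fin d → ℤ := (2:ℤ) • α with hβ
  have hsmul_inj : Function.Injective (fun n : ℤ => n • α) := smul_left_injective ℤ hα
  have hinj : Function.Injective (fun n : ℤ => ν + n • α) := fun a b hab =>
    hsmul_inj (add_left_cancel hab)
  set T : Finset ℤ := f.coeff.support.preimage (fun n => ν + n • α) hinj.injOn with hT
  have hmemT : ∀ n : ℤ, n ∈ T ↔ ν + n • α ∈ f.coeff.support := fun n => Finset.mem_preimage
  have hfin : ∑ᶠ n : ℤ, f.coeff (ν + n • α) = ∑ n ∈ T, f.coeff (ν + n • α) := by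
    refine finsum_eq_finset_sum_of_support_subset _ fun n hn => ?_
    rw [Finset.mem_coe, hmemT, Finsupp.mem_support_iff]
    exact hn
  have hβsmul : ∀ m : ℤ, m • β = (m * 2) • α := fun m => by rw [hβ, smul_smul]
  have heven : ∑ n ∈ T.filter (fun n => Even n), f.coeff (ν + n • α) = Lmap β ν f := by
    rw [Lmap_eq_filter_sum]
    refine Finset.sum_bij (fun n _ => ν + n • α) ?_ ?_ ?_ ?_
    · rintro n hn
      rw [Finset.mem_filter] at hn
      obtain ⟨hnT, r, hr⟩ := hn
      rw [Finset.mem_filter]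
      refine ⟨Finsupp.mem_support_iff.mp ((hmemT n).mp hnT) |> Finsupp.mem_support_iff.mpr, r, ?_⟩
      show ν + n • α = ν + r • β
      rw [hr, hβsmul r, show (r * 2 : ℤ) = r + r from by ring]
    · intro a _ b _ hab
      exact hinj hab
    · rintro μ hμ
      rw [Finset.mem_filter] at hμ
      obtain ⟨hμs, m, hm⟩ := hμ
      refine ⟨m * 2, ?_, ?_⟩
      · rw [Finset.mem_filter]
        refine ⟨?_, ⟨m, by ring⟩⟩
        rw [hmemT, ← hβsmul m, ← hm]
        exact hμs
      · show ν + (m * 2) • α = μ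
        rw [← hβsmul m, ← hm]
    · intro n _; rfl
  have hodd : ∑ n ∈ T.filter (fun n => ¬ Even n), f.coeff (ν + n • α) = Lmap β (ν + α) f := by
    rw [Lmap_eq_filter_sum]
    refine Finset.sum_bij (fun n _ => ν + n • α) ?_ ?_ ?_ ?_
    · rintro n hn
      rw [Finset.mem_filter] at hn
      obtain ⟨hnT, hne⟩ := hn
      obtain ⟨r, hr⟩ := Int.not_even_iff_odd.mp hne
      rw [Finset.mem_filter]
      refine ⟨(hmemT n).mp hnT, r, ?_⟩
      show ν + n • α = ν + α + r • β
      rw [hr, hβsmul r, add_smul, one_smul, show (2 * r : ℤ) = r * 2 from by ring]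
      abel
    · intro a _ b _ hab
      exact hinj hab
    · rintro μ hμ
      rw [Finset.mem_filter] at hμ
      obtain ⟨hμs, m, hm⟩ := hμ
      refine ⟨m * 2 + 1, ?_, ?_⟩
      · rw [Finset.mem_filter]
        constructor
        · rw [hmemT]
          have : ν + (m * 2 + 1) • α = ν + α + m • β := by
            rw [hβsmul m, add_smul, one_smul]; abel
          rw [this, ← hm]
          exact hμs
        · rw [Int.not_even_iff_odd]
          exact ⟨m, by ring⟩
      · show ν + (m * 2 + 1) • α = μ
        rw [hm, hβsmul m, add_smul, one_smul]
        abel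
    · intro n _; rfl
  rw [hfin, ← Finset.sum_filter_add_sum_filter_not T (fun n => Even n), heven, hodd]

end StmtAux

/-- Let `k` be a field of characteristic zero, `d ≥ 1`, `B : ℤ^d × ℤ^d → ℤ` a bilinear
form and `α ∈ ℤ^d` nonzero with `B α α = 0`.  Let `f : ℤ^d → k` be finitely supported
such that differences of elements of its support lying in `ℤα` actually lie in `2ℤα`.
Then `D_α f = Σ_μ B(μ,α) • f(μ) x^μ` lies in the ideal of `k[ℤ^d]` generated by
`x^(2α) - 1` if and only if for every `ν` with `B(ν,α) ≠ 0` one has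
`Σ_{n ∈ ℤ} f(ν + nα) = 0`. -/
theorem stmt2 (k : Type*) [Field k] [CharZero k] (d : ℕ) (hd : 1 ≤ d)
    (B : (Fin d → ℤ) →ₗ[ℤ] (Fin d → ℤ) →ₗ[ℤ] ℤ)
    (α : Fin d → ℤ) (hα : α ≠ 0) (hiso : B α α = 0)
    (f : AddMonoidAlgebra k (Fin d → ℤ))
    (hsupp : ∀ μ ∈ f.coeff.support, ∀ μ' ∈ f.coeff.support,
      (∃ n : ℤ, μ - μ' = n • α) → ∃ n : ℤ, μ - μ' = (2 * n) • α) :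
    (Finsupp.sum f.coeff fun μ c =>
        AddMonoidAlgebra.single μ (B μ α • c) : AddMonoidAlgebra k (Fin d → ℤ)) ∈
      Ideal.span {AddMonoidAlgebra.of' k (Fin d → ℤ) (2 • α) - 1} ↔
    ∀ ν : Fin d → ℤ, B ν α ≠ 0 → ∑ᶠ n : ℤ, f.coeff (ν + n • α) = 0 := by
  classical
  have h2α : (2 • α : Fin d → ℤ) = (2 : ℤ) • α := by
    funext i; simp
  rw [h2α]
  set β : Fin d → ℤ := (2 : ℤ) • α with hβ
  set g := (Finsupp.sum f.coeff fun μ c =>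
      AddMonoidAlgebra.single μ (B μ α • c) : AddMonoidAlgebra k (Fin d → ℤ)) with hgdef
  have hβsmul : ∀ m : ℤ, m • β = (m * 2) • α := fun m => by rw [hβ, smul_smul]
  have hg : ∀ μ, g.coeff μ = B μ α • f.coeff μ := by
    intro μ
    rw [hgdef, AddMonoidAlgebra.coeff_finsuppSum, Finsupp.sum_apply]
    simp only [AddMonoidAlgebra.coeff_single, Finsupp.single_apply]
    rw [Finsupp.sum_ite_eq']
    by_cases hμ : μ ∈ f.coeff.support
    · rw [if_pos hμ]
    · rw [if_neg hμ, Finsupp.notMem_support_iff.mp hμ, smul_zero]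
  have hgsupp : g.coeff.support ⊆ f.coeff.support := by
    intro μ hμ
    rw [Finsupp.mem_support_iff] at hμ ⊢
    intro hf
    exact hμ (by rw [hg μ, hf, smul_zero])
  have hBcoset : ∀ (ν : Fin d → ℤ) (m : ℤ), B (ν + m • β) α = B ν α := by
    intro ν m
    rw [hβsmul m, map_add, LinearMap.add_apply, map_smul, LinearMap.smul_apply, hiso]
    simp
  have hLg : ∀ ν, Lmap β ν g = (B ν α : ℤ) • Lmap β ν f := by
    intro ν
    rw [Lmap_apply_eq_sum β ν g hgsupp, Lmap, Finset.smul_sum]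
    refine Finset.sum_congr rfl fun μ _ => ?_
    by_cases h : ∃ m : ℤ, μ = ν + m • β
    · rw [if_pos h, if_pos h, hg μ]
      obtain ⟨m, rfl⟩ := h
      rw [hBcoset ν m]
    · rw [if_neg h, if_neg h, smul_zero]
  constructor
  · intro hmem ν hB
    have hLf : ∀ ν' : Fin d → ℤ, B ν' α ≠ 0 → Lmap β ν' f = 0 := by
      intro ν' hB'
      have h1 := Lmap_eq_zero_of_mem β ν' g hmem
      rw [hLg ν', zsmul_eq_mul] at h1
      exact (mul_eq_zero.mp h1).resolve_left (Int.cast_ne_zero.mpr hB')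
    have hsplit := finsum_coset_split α hα f ν (k := k)
    rw [← hβ] at hsplit
    have hB2 : B (ν + α) α ≠ 0 := by
      rw [map_add, LinearMap.add_apply, hiso, add_zero]
      exact hB
    rw [hsplit, hLf ν hB, hLf (ν + α) hB2, add_zero]
  · intro hS
    apply mem_of_Lmap_eq_zero
    intro ν
    rw [hLg ν]
    by_cases hB : B ν α = 0
    · rw [hB]
      exact zero_smul _ _
    · suffices hL0 : Lmap β ν f = 0 by rw [hL0, smul_zero]
      rcases Finset.eq_empty_or_nonempty
          (f.coeff.support.filter (fun μ => ∃ m : ℤ, μ = ν + m • β)) with hA | ⟨μ₀, hμ₀⟩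
      · rw [Lmap_eq_filter_sum, hA, Finset.sum_empty]
      · rw [Finset.mem_filter] at hμ₀
        obtain ⟨hμ₀s, m₀, hm₀⟩ := hμ₀
        have hodd0 : Lmap β (ν + α) f = 0 := by
          rw [Lmap_eq_filter_sum]
          have hempty : f.coeff.support.filter (fun μ => ∃ m : ℤ, μ = ν + α + m • β) = ∅ := by
            rw [Finset.filter_eq_empty_iff]
            rintro μ₁ hμ₁s ⟨m₁, hm₁⟩
            have hdiff : μ₀ - μ₁ = (m₀ * 2 - (m₁ * 2 + 1)) • α := by
              rw [hm₀, hm₁, hβsmul m₀, hβsmul m₁, sub_smul, add_smul, one_smul]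
              abel
            obtain ⟨nn, hnn⟩ := hsupp μ₀ hμ₀s μ₁ hμ₁s ⟨m₀ * 2 - (m₁ * 2 + 1), hdiff⟩
            rw [hdiff] at hnn
            have := smul_left_injective ℤ hα hnn
            omega
          rw [hempty, Finset.sum_empty]
        have hsplit := finsum_coset_split α hα f ν (k := k)
        rw [← hβ] at hsplit
        rw [hS ν hB] at hsplit
        rw [hodd0, add_zero] at hsplit
        exact hsplit.symm
end

section
/- Let m, n ≥ 0 be integers with m ≠ n. In ℚ^{m+1} × ℚ^{n+1} define the subgroups ℤΦ = {(a, b) : all a_i and b_j are integers and Σ_{i=1}^{m+1} a_i + Σ_{j=1}^{n+1} b_j = 0} and Λ = {(a, b) : a_i − a_{i+1} ∈ ℤ for 1 ≤ i ≤ m, b_j − b_{j+1} ∈ ℤ for 1 ≤ j ≤ n, and Σ_{i=1}^{m+1} a_i + Σ_{j=1}^{n+1} b_j = 0}. Let e ∈ ℚ^{m+1} × ℚ^{n+1} be the vector with a_i = (−1)^{i+1} for all i and b = 0, and let d be the vector with a = 0 and b_j = (−1)^j for all j. Then 2Λ ∩ ℤΦ equals: 2ℤΦ + ℤ(e + d)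 if m and n are both even; 2ℤΦ + ℤd if m is even and n is odd; 2ℤΦ + ℤe if m is odd and n is even; and 2ℤΦ + ℤe + ℤd if m and n are both odd. -/
open Pointwise

/-- The root lattice of `A(m,n) = sl(m+1|n+1)`: vectors of
`ℚ^{m+1} × ℚ^{n+1}` with integer coordinates summing to zero. -/
def rootLatticeA (m n : ℕ) : Set ((Fin (m + 1) → ℚ) × (Fin (n + 1) → ℚ)) :=
  {p | (∀ i, ∃ z : ℤ, p.1 i = z) ∧ (∀ j, ∃ z : ℤ, p.2 j = z) ∧
    (∑ i, p.1 i) + (∑ j, p.2 j) = 0}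

/-- The integral weight lattice of `A(m,n)`: vectors of `ℚ^{m+1} × ℚ^{n+1}` with
integer consecutive differences and coordinates summing to zero. -/
def weightLatticeA (m n : ℕ) : Set ((Fin (m + 1) → ℚ) × (Fin (n + 1) → ℚ)) :=
  {p | (∀ i : Fin m, ∃ z : ℤ, p.1 i.castSucc - p.1 i.succ = z) ∧
       (∀ j : Fin n, ∃ z : ℤ, p.2 j.castSucc - p.2 j.succ = z) ∧
       (∑ i, p.1 i) + (∑ j, p.2 j) = 0}

/-- The vector `e = Σ_{i=1}^{m+1} (-1)^{i+1} ε_i` (in `0`-indexed coordinates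
`a_i = (-1)^i`, `b = 0`). -/
def eVecA (m n : ℕ) : (Fin (m + 1) → ℚ) × (Fin (n + 1) → ℚ) :=
  (fun i => (-1 : ℚ) ^ (i : ℕ), 0)

/-- The vector `d = Σ_{j=1}^{n+1} (-1)^j δ_j` (in `0`-indexed coordinates `a = 0`,
`b_j = (-1)^{j+1}`). -/
def dVecA (m n : ℕ) : (Fin (m + 1) → ℚ) × (Fin (n + 1) → ℚ) :=
  (0, fun j => (-1 : ℚ) ^ ((j : ℕ) + 1))

lemma sumE' (N : ℕ) : (∑ i : Fin N, (-1:ℤ)^(i:ℕ)) = if Even N then 0 else 1 := by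
  rw [Fin.sum_univ_eq_sum_range]; exact neg_one_geom_sum

lemma sumD' (N : ℕ) : (∑ i : Fin N, (-1:ℤ)^((i:ℕ)+1)) = if Even N then 0 else -1 := by
  have : ∀ i : Fin N, (-1:ℤ)^((i:ℕ)+1) = -((-1:ℤ)^(i:ℕ)) := by intro i; ring
  simp only [this, Finset.sum_neg_distrib, sumE']
  split <;> simp

lemma sumE_even {m : ℕ} (hm : Even m) : (∑ i : Fin (m+1), (-1:ℤ)^(i:ℕ)) = 1 := by
  rw [sumE', if_neg]; simp [Nat.even_add_one, hm]

lemma sumE_odd {m : ℕ} (hm : Odd m) : (∑ i : Fin (m+1), (-1:ℤ)^(i:ℕ)) = 0 := by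
  rw [sumE', if_pos hm.add_one]

lemma sumD_even {n : ℕ} (hn : Even n) : (∑ j : Fin (n+1), (-1:ℤ)^((j:ℕ)+1)) = -1 := by
  rw [sumD', if_neg]; simp [Nat.even_add_one, hn]

lemma sumD_odd {n : ℕ} (hn : Odd n) : (∑ j : Fin (n+1), (-1:ℤ)^((j:ℕ)+1)) = 0 := by
  rw [sumD', if_pos hn.add_one]

lemma zmod2_even {x : ℤ} (h : (x : ZMod 2) = 0) : ∃ w : ℤ, x = 2 * w := by
  have := (ZMod.intCast_zmod_eq_zero_iff_dvd x 2).mp h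
  obtain ⟨w, hw⟩ := this; exact ⟨w, by exact_mod_cast hw⟩

lemma zmod2_natCast_even {k : ℕ} (h : Even k) : ((k:ℕ) : ZMod 2) = 0 :=
  (ZMod.natCast_eq_zero_iff k 2).mpr h.two_dvd

lemma zmod2_natCast_odd {k : ℕ} (h : Odd k) : ((k:ℕ) : ZMod 2) = 1 := by
  obtain ⟨t, rfl⟩ := h; push_cast
  have : (2 : ZMod 2) = 0 := by decide
  rw [this]; ring

lemma smul_fst_apply {m n : ℕ} (c : ℚ) (p : (Fin (m + 1) → ℚ) × (Fin (n + 1) → ℚ)) (i) :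
    (c • p).1 i = c * p.1 i := rfl

lemma smul_snd_apply {m n : ℕ} (c : ℚ) (p : (Fin (m + 1) → ℚ) × (Fin (n + 1) → ℚ)) (j) :
    (c • p).2 j = c * p.2 j := rfl

lemma mem_lhs_iff (m n : ℕ) (p : (Fin (m + 1) → ℚ) × (Fin (n + 1) → ℚ)) :
    p ∈ ((2:ℚ) • weightLatticeA m n) ∩ rootLatticeA m n ↔
    ∃ (A : Fin (m+1) → ℤ) (B : Fin (n+1) → ℤ),
      (∀ i, p.1 i = A i) ∧ (∀ j, p.2 j = B j) ∧
      (∀ i, (A i : ZMod 2) = ((A 0 : ℤ) : ZMod 2)) ∧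
      (∀ j, (B j : ZMod 2) = ((B 0 : ℤ) : ZMod 2)) ∧
      (∑ i, A i) + (∑ j, B j) = 0 := by
  rw [Set.mem_inter_iff, Set.mem_smul_set_iff_inv_smul_mem₀ (two_ne_zero)]
  constructor
  · rintro ⟨⟨hw1, hw2, -⟩, hr1, hr2, hsum⟩
    choose A hA using hr1
    choose B hB using hr2
    have keyA : ∀ i : Fin m, (A i.succ : ZMod 2) = (A i.castSucc : ZMod 2) := by
      intro i
      obtain ⟨z, hz⟩ := hw1 i
      rw [smul_fst_apply, smul_fst_apply, hA, hA] at hz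
      have h2 : (A i.castSucc : ℚ) - A i.succ = 2 * z := by
        field_simp at hz; linarith
      have hInt : A i.castSucc - A i.succ = 2 * z := by exact_mod_cast h2
      have : ((A i.castSucc - A i.succ : ℤ) : ZMod 2) = 0 := by
        rw [hInt]; push_cast; ring_nf
        rw [show (2 : ZMod 2) = 0 from by decide]; ring
      push_cast at this; linear_combination -this
    have keyB : ∀ j : Fin n, (B j.succ : ZMod 2) = (B j.castSucc : ZMod 2) := by
      intro j
      obtain ⟨z, hz⟩ := hw2 j
      rw [smul_snd_apply, smul_snd_apply, hB, hB] at hz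
      have h2 : (B j.castSucc : ℚ) - B j.succ = 2 * z := by
        field_simp at hz; linarith
      have hInt : B j.castSucc - B j.succ = 2 * z := by exact_mod_cast h2
      have : ((B j.castSucc - B j.succ : ℤ) : ZMod 2) = 0 := by
        rw [hInt]; push_cast; ring_nf
        rw [show (2 : ZMod 2) = 0 from by decide]; ring
      push_cast at this; linear_combination -this
    refine ⟨A, B, hA, hB, ?_, ?_, ?_⟩
    · intro i
      induction i using Fin.induction with
      | zero => rfl
      | succ i ih => rw [keyA i, ih]
    · intro j
      induction j using Fin.induction with
      | zero => rfl
      | succ j ih => rw [keyB j, ih]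
    · have : ((∑ i, A i : ℤ) : ℚ) + ((∑ j, B j : ℤ) : ℚ) = 0 := by
        push_cast
        rw [← Finset.sum_congr rfl (fun i _ => hA i), ← Finset.sum_congr rfl (fun j _ => hB j)]
        exact hsum
      exact_mod_cast this
  · rintro ⟨A, B, hA, hB, hpA, hpB, hsum⟩
    have hsumQ : (∑ i, p.1 i) + (∑ j, p.2 j) = 0 := by
      rw [Finset.sum_congr rfl (fun i _ => hA i), Finset.sum_congr rfl (fun j _ => hB j)]
      exact_mod_cast congrArg (fun z : ℤ => (z : ℚ)) hsum
    refine ⟨⟨?_, ?_, ?_⟩, fun i => ⟨A i, hA i⟩, fun j => ⟨B j, hB j⟩, hsumQ⟩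
    · intro i
      have : ((A i.castSucc - A i.succ : ℤ) : ZMod 2) = 0 := by
        push_cast; rw [hpA i.castSucc, hpA i.succ]; ring
      obtain ⟨w, hw⟩ := zmod2_even this
      refine ⟨w, ?_⟩
      rw [smul_fst_apply, smul_fst_apply, hA, hA]
      have : (A i.castSucc : ℚ) - A i.succ = 2 * w := by exact_mod_cast hw
      field_simp; linarith
    · intro j
      have : ((B j.castSucc - B j.succ : ℤ) : ZMod 2) = 0 := by
        push_cast; rw [hpB j.castSucc, hpB j.succ]; ring
      obtain ⟨w, hw⟩ := zmod2_even this
      refine ⟨w, ?_⟩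
      rw [smul_snd_apply, smul_snd_apply, hB, hB]
      have : (B j.castSucc : ℚ) - B j.succ = 2 * w := by exact_mod_cast hw
      field_simp; linarith
    · have h1 : (∑ i, ((2:ℚ)⁻¹ • p).1 i) = 2⁻¹ * ∑ i, p.1 i := by
        rw [Finset.mul_sum]; exact Finset.sum_congr rfl (fun i _ => rfl)
      have h2 : (∑ j, ((2:ℚ)⁻¹ • p).2 j) = 2⁻¹ * ∑ j, p.2 j := by
        rw [Finset.mul_sum]; exact Finset.sum_congr rfl (fun j _ => rfl)
      rw [h1, h2, ← mul_add, hsumQ, mul_zero]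

lemma mem_two_root_iff (m n : ℕ) (p : (Fin (m + 1) → ℚ) × (Fin (n + 1) → ℚ)) :
    p ∈ ((2:ℚ) • rootLatticeA m n) ↔
    ∃ (C : Fin (m+1) → ℤ) (D : Fin (n+1) → ℤ),
      (∀ i, p.1 i = 2 * C i) ∧ (∀ j, p.2 j = 2 * D j) ∧
      (∑ i, C i) + (∑ j, D j) = 0 := by
  rw [Set.mem_smul_set_iff_inv_smul_mem₀ (two_ne_zero)]
  constructor
  · rintro ⟨h1, h2, hsum⟩
    choose C hC using h1
    choose D hD using h2
    have hC' : ∀ i, p.1 i = 2 * C i := by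
      intro i
      have := hC i
      rw [show ((2:ℚ)⁻¹ • p).1 i = 2⁻¹ * p.1 i from rfl] at this
      field_simp at this; linarith
    have hD' : ∀ j, p.2 j = 2 * D j := by
      intro j
      have := hD j
      rw [show ((2:ℚ)⁻¹ • p).2 j = 2⁻¹ * p.2 j from rfl] at this
      field_simp at this; linarith
    refine ⟨C, D, hC', hD', ?_⟩
    have : ((∑ i, C i : ℤ) : ℚ) + ((∑ j, D j : ℤ) : ℚ) = 0 := by
      push_cast
      rw [← Finset.sum_congr rfl (fun i _ => hC i), ← Finset.sum_congr rfl (fun j _ => hD j)]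
      exact hsum
    exact_mod_cast this
  · rintro ⟨C, D, hC, hD, hsum⟩
    refine ⟨fun i => ⟨C i, ?_⟩, fun j => ⟨D j, ?_⟩, ?_⟩
    · rw [show ((2:ℚ)⁻¹ • p).1 i = 2⁻¹ * p.1 i from rfl, hC i]; ring
    · rw [show ((2:ℚ)⁻¹ • p).2 j = 2⁻¹ * p.2 j from rfl, hD j]; ring
    · have e1 : (∑ i, ((2:ℚ)⁻¹ • p).1 i) = ∑ i, ((C i : ℤ) : ℚ) := by
        refine Finset.sum_congr rfl (fun i _ => ?_)
        rw [show ((2:ℚ)⁻¹ • p).1 i = 2⁻¹ * p.1 i from rfl, hC i]; push_cast; ring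
      have e2 : (∑ j, ((2:ℚ)⁻¹ • p).2 j) = ∑ j, ((D j : ℤ) : ℚ) := by
        refine Finset.sum_congr rfl (fun j _ => ?_)
        rw [show ((2:ℚ)⁻¹ • p).2 j = 2⁻¹ * p.2 j from rfl, hD j]; push_cast; ring
      rw [e1, e2]
      exact_mod_cast congrArg (fun z : ℤ => (z : ℚ)) hsum

lemma decomp (m n : ℕ) (p : (Fin (m + 1) → ℚ) × (Fin (n + 1) → ℚ))
    (A : Fin (m+1) → ℤ) (B : Fin (n+1) → ℤ) (z w : ℤ)
    (hA : ∀ i, p.1 i = A i) (hB : ∀ j, p.2 j = B j)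
    (hpA : ∀ i, (A i : ZMod 2) = ((z : ℤ) : ZMod 2))
    (hpB : ∀ j, (B j : ZMod 2) = ((w : ℤ) : ZMod 2))
    (hsum : (∑ i, A i) + (∑ j, B j)
      = z * (∑ i : Fin (m+1), (-1:ℤ)^(i:ℕ)) + w * (∑ j : Fin (n+1), (-1:ℤ)^((j:ℕ)+1))) :
    p - z • eVecA m n - w • dVecA m n ∈ ((2:ℚ) • rootLatticeA m n) := by
  have hc1 : ∀ i, (p - z • eVecA m n - w • dVecA m n).1 i
      = ((A i - z * (-1)^(i:ℕ) : ℤ) : ℚ) := by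
    intro i
    show p.1 i - z • ((-1:ℚ)^(i:ℕ)) - w • ((0 : Fin (m+1) → ℚ) i) = _
    rw [hA i]
    push_cast
    simp [zsmul_eq_mul]
  have hc2 : ∀ j, (p - z • eVecA m n - w • dVecA m n).2 j
      = ((B j - w * (-1)^((j:ℕ)+1) : ℤ) : ℚ) := by
    intro j
    show p.2 j - z • ((0 : Fin (n+1) → ℚ) j) - w • ((-1:ℚ)^((j:ℕ)+1)) = _
    rw [hB j]
    push_cast
    simp [zsmul_eq_mul]
  have hevA : ∀ i, ∃ c : ℤ, A i - z * (-1)^(i:ℕ) = 2 * c := by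
    intro i
    apply zmod2_even
    push_cast
    rw [show (-1 : ZMod 2) = 1 from by decide, one_pow, hpA i]
    ring
  have hevB : ∀ j, ∃ c : ℤ, B j - w * (-1)^((j:ℕ)+1) = 2 * c := by
    intro j
    apply zmod2_even
    push_cast
    rw [show (-1 : ZMod 2) = 1 from by decide, one_pow, hpB j]
    ring
  choose C hCdef using hevA
  choose D hDdef using hevB
  rw [mem_two_root_iff]
  refine ⟨C, D, ?_, ?_, ?_⟩
  · intro i; rw [hc1 i, hCdef i]; push_cast; ring
  · intro j; rw [hc2 j, hDdef j]; push_cast; ring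
  · have key : 2 * ((∑ i, C i) + (∑ j, D j)) = 0 := by
      have e1 : (∑ i, (A i - z * (-1)^(i:ℕ))) = 2 * ∑ i, C i := by
        rw [Finset.mul_sum]; exact Finset.sum_congr rfl (fun i _ => hCdef i)
      have e2 : (∑ j, (B j - w * (-1)^((j:ℕ)+1))) = 2 * ∑ j, D j := by
        rw [Finset.mul_sum]; exact Finset.sum_congr rfl (fun j _ => hDdef j)
      have e1' : (∑ i, (A i - z * (-1)^(i:ℕ)))
          = (∑ i, A i) - z * (∑ i : Fin (m+1), (-1:ℤ)^(i:ℕ)) := by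
        rw [Finset.sum_sub_distrib, Finset.mul_sum]
      have e2' : (∑ j, (B j - w * (-1)^((j:ℕ)+1)))
          = (∑ j, B j) - w * (∑ j : Fin (n+1), (-1:ℤ)^((j:ℕ)+1)) := by
        rw [Finset.sum_sub_distrib, Finset.mul_sum]
      rw [mul_add, ← e1, ← e2, e1', e2']
      linarith [hsum]
    omega

lemma build (m n : ℕ) (q : (Fin (m + 1) → ℚ) × (Fin (n + 1) → ℚ))
    (hq : q ∈ (2:ℚ) • rootLatticeA m n) (z w : ℤ)
    (hzw : z * (∑ i : Fin (m+1), (-1:ℤ)^(i:ℕ))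
      + w * (∑ j : Fin (n+1), (-1:ℤ)^((j:ℕ)+1)) = 0) :
    q + z • eVecA m n + w • dVecA m n
      ∈ ((2:ℚ) • weightLatticeA m n) ∩ rootLatticeA m n := by
  obtain ⟨C, D, hC, hD, hsum⟩ := (mem_two_root_iff m n q).mp hq
  rw [mem_lhs_iff]
  refine ⟨fun i => 2 * C i + z * (-1)^(i:ℕ),
          fun j => 2 * D j + w * (-1)^((j:ℕ)+1), ?_, ?_, ?_, ?_, ?_⟩
  · intro i
    show q.1 i + z • ((-1:ℚ)^(i:ℕ)) + w • ((0 : Fin (m+1) → ℚ) i) = _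
    rw [hC i]; push_cast; simp [zsmul_eq_mul]
  · intro j
    show q.2 j + z • ((0 : Fin (n+1) → ℚ) j) + w • ((-1:ℚ)^((j:ℕ)+1)) = _
    rw [hD j]; push_cast; simp [zsmul_eq_mul]
  · intro i
    push_cast
    rw [show (-1 : ZMod 2) = 1 from by decide, show (2 : ZMod 2) = 0 from by decide]
    simp
  · intro j
    push_cast
    rw [show (-1 : ZMod 2) = 1 from by decide, show (2 : ZMod 2) = 0 from by decide]
    simp
  · rw [Finset.sum_add_distrib, Finset.sum_add_distrib, ← Finset.mul_sum,
      ← Finset.mul_sum, ← Finset.mul_sum, ← Finset.mul_sum]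
    linarith [hsum, hzw]

lemma parity_sum (m n : ℕ) (A : Fin (m+1) → ℤ) (B : Fin (n+1) → ℤ)
    (hpA : ∀ i, (A i : ZMod 2) = ((A 0 : ℤ) : ZMod 2))
    (hpB : ∀ j, (B j : ZMod 2) = ((B 0 : ℤ) : ZMod 2))
    (hsum : (∑ i, A i) + (∑ j, B j) = 0) :
    ((m+1 : ℕ) : ZMod 2) * ((A 0 : ℤ) : ZMod 2)
      + ((n+1 : ℕ) : ZMod 2) * ((B 0 : ℤ) : ZMod 2) = 0 := by
  have h := congrArg (fun x : ℤ => (x : ZMod 2)) hsum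
  push_cast at h
  rw [Finset.sum_congr rfl (fun i _ => hpA i), Finset.sum_congr rfl (fun j _ => hpB j),
    Finset.sum_const, Finset.sum_const, Finset.card_univ, Finset.card_univ,
    Fintype.card_fin, Fintype.card_fin, nsmul_eq_mul, nsmul_eq_mul] at h
  exact_mod_cast h

/-- For `A(m,n)` with `m ≠ n`, the lattice `2Λ ∩ ℤΦ` equals `2ℤΦ + ℤ(e+d)`,
`2ℤΦ + ℤd`, `2ℤΦ + ℤe`, or `2ℤΦ + ℤe + ℤd` according to the parities of `m, n`. -/
theorem stmt6 (m n : ℕ) (hmn : m ≠ n) :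
    (Even m → Even n →
      ((2 : ℚ) • weightLatticeA m n) ∩ rootLatticeA m n =
        ((2 : ℚ) • rootLatticeA m n) +
          Set.range (fun z : ℤ => z • (eVecA m n + dVecA m n))) ∧
    (Even m → Odd n →
      ((2 : ℚ) • weightLatticeA m n) ∩ rootLatticeA m n =
        ((2 : ℚ) • rootLatticeA m n) + Set.range (fun z : ℤ => z • dVecA m n)) ∧
    (Odd m → Even n →
      ((2 : ℚ) • weightLatticeA m n) ∩ rootLatticeA m n =
        ((2 : ℚ) • rootLatticeA m n) + Set.range (fun z : ℤ => z • eVecA m n)) ∧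
    (Odd m → Odd n →
      ((2 : ℚ) • weightLatticeA m n) ∩ rootLatticeA m n =
        ((2 : ℚ) • rootLatticeA m n) + Set.range (fun z : ℤ => z • eVecA m n)
          + Set.range (fun z : ℤ => z • dVecA m n)) := by
  refine ⟨?_, ?_, ?_, ?_⟩
  · -- even, even
    intro hm hn
    ext p
    constructor
    · intro hp
      obtain ⟨A, B, hA, hB, hpA, hpB, hsum⟩ := (mem_lhs_iff m n p).mp hp
      have hcast := parity_sum m n A B hpA hpB hsum
      rw [zmod2_natCast_odd hm.add_one, zmod2_natCast_odd hn.add_one,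
        one_mul, one_mul] at hcast
      have hBA : ((B 0 : ℤ) : ZMod 2) = ((A 0 : ℤ) : ZMod 2) := by
        have h2 : ∀ x y : ZMod 2, x + y = 0 → y = x := by decide
        exact h2 _ _ hcast
      have hpB' : ∀ j, (B j : ZMod 2) = ((A 0 : ℤ) : ZMod 2) :=
        fun j => by rw [hpB j, hBA]
      have hq := decomp m n p A B (A 0) (A 0) hA hB hpA hpB' (by
        rw [sumE_even hm, sumD_even hn]; linarith [hsum])
      rw [Set.mem_add]
      refine ⟨_, hq, (A 0) • (eVecA m n + dVecA m n), ⟨A 0, rfl⟩, ?_⟩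
      rw [smul_add]; abel
    · intro hp
      rw [Set.mem_add] at hp
      obtain ⟨q, hq, y, ⟨z, rfl⟩, rfl⟩ := hp
      have hmem := build m n q hq z z (by rw [sumE_even hm, sumD_even hn]; ring)
      have h2 : q + z • (eVecA m n + dVecA m n)
          = q + z • eVecA m n + z • dVecA m n := by
        rw [smul_add, add_assoc]
      rw [h2]
      exact hmem
  · -- even, odd
    intro hm hn
    ext p
    constructor
    · intro hp
      obtain ⟨A, B, hA, hB, hpA, hpB, hsum⟩ := (mem_lhs_iff m n p).mp hp
      have hcast := parity_sum m n A B hpA hpB hsum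
      rw [zmod2_natCast_odd hm.add_one, zmod2_natCast_even hn.add_one,
        one_mul, zero_mul, add_zero] at hcast
      have hpA' : ∀ i, (A i : ZMod 2) = ((0 : ℤ) : ZMod 2) := by
        intro i; rw [hpA i, hcast]; simp
      have hq := decomp m n p A B 0 (B 0) hA hB hpA' hpB (by
        rw [sumD_odd hn]; simpa using hsum)
      rw [Set.mem_add]
      refine ⟨_, hq, (B 0) • dVecA m n, ⟨B 0, rfl⟩, ?_⟩
      abel_nf
      rw [zero_smul, add_zero]
    · intro hp
      rw [Set.mem_add] at hp
      obtain ⟨q, hq, y, ⟨w, rfl⟩, rfl⟩ := hp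
      have hmem := build m n q hq 0 w (by rw [sumE_even hm, sumD_odd hn]; ring)
      rw [zero_smul, add_zero] at hmem
      exact hmem
  · -- odd, even
    intro hm hn
    ext p
    constructor
    · intro hp
      obtain ⟨A, B, hA, hB, hpA, hpB, hsum⟩ := (mem_lhs_iff m n p).mp hp
      have hcast := parity_sum m n A B hpA hpB hsum
      rw [zmod2_natCast_even hm.add_one, zmod2_natCast_odd hn.add_one,
        zero_mul, one_mul, zero_add] at hcast
      have hpB' : ∀ j, (B j : ZMod 2) = ((0 : ℤ) : ZMod 2) := by
        intro j; rw [hpB j, hcast]; simp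
      have hq := decomp m n p A B (A 0) 0 hA hB hpA hpB' (by
        rw [sumE_odd hm]; simpa using hsum)
      rw [Set.mem_add]
      refine ⟨_, hq, (A 0) • eVecA m n, ⟨A 0, rfl⟩, ?_⟩
      abel_nf
      rw [zero_smul, add_zero]
    · intro hp
      rw [Set.mem_add] at hp
      obtain ⟨q, hq, y, ⟨z, rfl⟩, rfl⟩ := hp
      have hmem := build m n q hq z 0 (by rw [sumE_odd hm, sumD_even hn]; ring)
      rw [zero_smul, add_zero] at hmem
      exact hmem
  · -- odd, odd
    intro hm hn
    ext p
    constructor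
    · intro hp
      obtain ⟨A, B, hA, hB, hpA, hpB, hsum⟩ := (mem_lhs_iff m n p).mp hp
      have hq := decomp m n p A B (A 0) (B 0) hA hB hpA hpB (by
        rw [sumE_odd hm, sumD_odd hn]; simpa using hsum)
      rw [Set.mem_add]
      refine ⟨p - (A 0) • eVecA m n - (B 0) • dVecA m n + (A 0) • eVecA m n, ?_,
        (B 0) • dVecA m n, ⟨B 0, rfl⟩, by abel⟩
      rw [Set.mem_add]
      exact ⟨_, hq, (A 0) • eVecA m n, ⟨A 0, rfl⟩, rfl⟩
    · intro hp
      rw [Set.mem_add] at hp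
      obtain ⟨y, hy, u, ⟨w, rfl⟩, rfl⟩ := hp
      rw [Set.mem_add] at hy
      obtain ⟨q, hq, v, ⟨z, rfl⟩, rfl⟩ := hy
      exact build m n q hq z w (by rw [sumE_odd hm, sumD_odd hn]; ring)
end

section
/- Let m ≥ 2 and n ≥ 1 be integers. In ℚ^m × ℚ^n define the subgroups ℤΦ = {(λ, μ) : all λ_i and μ_j are integers and Σ_{i=1}^{m} λ_i + Σ_{j=1}^{n} μ_j is even} and Λ = {(λ, μ) : all μ_j ∈ ℤ, and either all λ_i ∈ ℤ or all λ_i ∈ ℤ + 1/2}. Let u ∈ ℚ^m × ℚ^n be the vector with λ_i = 1 for all i and μ = 0, and let w be the vector with λ_m = 1, all other coordinates 0. Then: if m is even, 2Λ ∩ ℤΦ = 2ℤΦ + ℤu + 2ℤw; if m is odd, 2Λ ∩ ℤΦ = 2ℤΦ + 2ℤw. -/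
open Pointwise

/-- The root lattice of `D(m,n) = osp(2m|2n)`: vectors of `ℚ^m × ℚ^n` with integer
coordinates of even total sum. -/
def rootLatticeD (m n : ℕ) : Set ((Fin m → ℚ) × (Fin n → ℚ)) :=
  {p | (∀ i, ∃ z : ℤ, p.1 i = z) ∧ (∀ j, ∃ z : ℤ, p.2 j = z) ∧
    ∃ z : ℤ, (∑ i, p.1 i) + (∑ j, p.2 j) = 2 * z}

/-- The integral weight lattice of `D(m,n)`: all `μ_j ∈ ℤ`, and either all
`λ_i ∈ ℤ` or all `λ_i ∈ ℤ + 1/2`. -/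
def weightLatticeD (m n : ℕ) : Set ((Fin m → ℚ) × (Fin n → ℚ)) :=
  {p | (∀ j, ∃ z : ℤ, p.2 j = z) ∧
    ((∀ i, ∃ z : ℤ, p.1 i = z) ∨ (∀ i, ∃ z : ℤ, p.1 i = z + 1/2))}

/-- The vector `u = Σ_{i=1}^m ε_i` of `ℚ^m × ℚ^n`. -/
def uVecD (m n : ℕ) : (Fin m → ℚ) × (Fin n → ℚ) := (fun _ => 1, 0)

/-- The vector `w = ε_m` of `ℚ^m × ℚ^n` (last `ε`-coordinate equal to `1`). -/
def wVecD (m n : ℕ) : (Fin m → ℚ) × (Fin n → ℚ) :=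
  (fun i => if (i : ℕ) = m - 1 then 1 else 0, 0)

def allEvenD (m n : ℕ) : Set ((Fin m → ℚ) × (Fin n → ℚ)) :=
  {p | (∀ i, ∃ z : ℤ, p.1 i = 2 * z) ∧ (∀ j, ∃ z : ℤ, p.2 j = 2 * z)}

lemma lemW (m n : ℕ) (hm : 1 ≤ m) :
    ((2 : ℚ) • rootLatticeD m n) + Set.range (fun z : ℤ => (2 * z) • wVecD m n)
      = allEvenD m n := by
  have hlt : m - 1 < m := Nat.sub_lt hm one_pos
  have hcond : ∀ i : Fin m, ((i:ℕ) = m - 1) = (i = ⟨m-1, hlt⟩) := by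
    intro i; rw [eq_iff_iff, Fin.ext_iff]
  ext p
  simp only [Set.mem_add, Set.mem_smul_set, Set.mem_range]
  constructor
  · rintro ⟨a, ⟨q, hq, rfl⟩, b, ⟨z, rfl⟩, rfl⟩
    obtain ⟨hq1, hq2, -⟩ := hq
    constructor
    · intro i
      obtain ⟨c, hc⟩ := hq1 i
      refine ⟨c + if (i:ℕ) = m-1 then z else 0, ?_⟩
      simp only [wVecD, Prod.fst_add, Prod.smul_fst, Pi.add_apply, Pi.smul_apply,
        smul_eq_mul, hc]
      by_cases h : (i:ℕ) = m - 1 <;> simp [h] <;> push_cast <;> ring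
    · intro j
      obtain ⟨c, hc⟩ := hq2 j
      refine ⟨c, ?_⟩
      simp only [wVecD, Prod.snd_add, Prod.smul_snd, Pi.add_apply, Pi.smul_apply,
        smul_eq_mul, hc, Pi.zero_apply, smul_zero, add_zero]
  · rintro ⟨h1, h2⟩
    choose a ha using h1
    choose b hb using h2
    set s : ℤ := (∑ i, a i) + (∑ j, b j) with hs
    refine ⟨(2:ℚ) • (fun i : Fin m => (a i : ℚ) - if (i:ℕ) = m-1 then (s:ℚ) else 0,
      fun j : Fin n => (b j : ℚ)), ⟨_, ⟨?_, ?_, ?_⟩, rfl⟩, (2*s) • wVecD m n, ⟨s, rfl⟩, ?_⟩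
    · intro i
      refine ⟨a i - if (i:ℕ) = m-1 then s else 0, ?_⟩
      by_cases h : (i:ℕ) = m-1 <;> simp [h]
    · intro j; exact ⟨b j, rfl⟩
    · refine ⟨0, ?_⟩
      simp only [hcond]
      rw [Finset.sum_sub_distrib, Finset.sum_ite_eq' Finset.univ (⟨m-1,hlt⟩ : Fin m)]
      simp only [Finset.mem_univ, if_true]
      push_cast [hs]
      ring
    · ext x
      · simp only [wVecD, Prod.fst_add, Prod.smul_fst, Pi.add_apply, Pi.smul_apply,
          smul_eq_mul]
        by_cases h : (x:ℕ) = m-1 <;> simp [h, ha x] <;> push_cast <;> ring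
      · simp only [wVecD, Prod.snd_add, Prod.smul_snd, Pi.add_apply, Pi.smul_apply,
          smul_eq_mul, Pi.zero_apply, smul_zero, add_zero, hb x]

/-- For `D(m,n)` with `m ≥ 2`, `n ≥ 1`: if `m` is even then
`2Λ ∩ ℤΦ = 2ℤΦ + ℤu + 2ℤw`, and if `m` is odd then `2Λ ∩ ℤΦ = 2ℤΦ + 2ℤw`. -/
theorem stmt8 (m n : ℕ) (hm : 2 ≤ m) (hn : 1 ≤ n) :
    (Even m →
      ((2 : ℚ) • weightLatticeD m n) ∩ rootLatticeD m n =
        ((2 : ℚ) • rootLatticeD m n) + Set.range (fun z : ℤ => z • uVecD m n)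
          + Set.range (fun z : ℤ => (2 * z) • wVecD m n)) ∧
    (Odd m →
      ((2 : ℚ) • weightLatticeD m n) ∩ rootLatticeD m n =
        ((2 : ℚ) • rootLatticeD m n) +
          Set.range (fun z : ℤ => (2 * z) • wVecD m n)) := by
  have hm1 : 1 ≤ m := le_trans one_le_two hm
  constructor
  · -- even case
    intro hme
    obtain ⟨k, hk⟩ := hme
    rw [add_right_comm, lemW m n hm1]
    ext p
    simp only [Set.mem_inter_iff, Set.mem_add, Set.mem_smul_set, Set.mem_range]
    constructor
    · rintro ⟨⟨q, ⟨hmu, hlam⟩, rfl⟩, hPhi⟩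
      rcases hlam with hint | hhalf
      · choose c hc using hint
        choose b hb using hmu
        refine ⟨(2:ℚ) • q, ⟨?_, ?_⟩, (0:ℤ) • uVecD m n, ⟨0, rfl⟩, by simp⟩
        · intro i; exact ⟨c i, by simp [hc i]⟩
        · intro j; exact ⟨b j, by simp [hb j]⟩
      · choose c hc using hhalf
        choose b hb using hmu
        refine ⟨(2:ℚ) • q - uVecD m n, ⟨?_, ?_⟩, (1:ℤ) • uVecD m n, ⟨1, rfl⟩, by abel⟩
        · intro i
          refine ⟨c i, ?_⟩
          simp [uVecD, hc i]
          ring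
        · intro j
          refine ⟨b j, ?_⟩
          simp [uVecD, hb j]
    · rintro ⟨x, ⟨hx1, hx2⟩, _, ⟨z, rfl⟩, rfl⟩
      choose a ha using hx1
      choose b hb using hx2
      have hsum1 : (∑ i, (x + z • uVecD m n).1 i)
          = 2 * (∑ i, (a i : ℚ)) + m * z := by
        rw [show (∑ i, (x + z • uVecD m n).1 i)
            = ∑ i : Fin m, (2 * (a i : ℚ) + z) from
          Finset.sum_congr rfl (fun i _ => by simp [ha i, uVecD])]
        rw [Finset.sum_add_distrib, ← Finset.mul_sum]
        simp [Finset.card_univ, mul_comm]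
      have hsum2 : (∑ j, (x + z • uVecD m n).2 j) = 2 * (∑ j, (b j : ℚ)) := by
        rw [show (∑ j, (x + z • uVecD m n).2 j) = ∑ j : Fin n, (2 * (b j : ℚ)) from
          Finset.sum_congr rfl (fun j _ => by simp [hb j, uVecD])]
        rw [← Finset.mul_sum]
      constructor
      · -- in 2 • weightLattice
        rcases Int.even_or_odd z with ⟨t, ht⟩ | ⟨t, ht⟩
        · refine ⟨(fun i => (a i : ℚ) + t, fun j => (b j : ℚ)),
            ⟨fun j => ⟨b j, rfl⟩, Or.inl fun i => ⟨a i + t, by push_cast; ring⟩⟩, ?_⟩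
          ext i
          · simp [ha i, uVecD, ht]; push_cast; ring
          · simp [hb i, uVecD]
        · refine ⟨(fun i => (a i : ℚ) + t + 1/2, fun j => (b j : ℚ)),
            ⟨fun j => ⟨b j, rfl⟩, Or.inr fun i => ⟨a i + t, by push_cast; ring⟩⟩, ?_⟩
          ext i
          · simp [ha i, uVecD, ht]; push_cast; ring
          · simp [hb i, uVecD]
      · -- in rootLattice
        refine ⟨fun i => ⟨2 * a i + z, by simp [ha i, uVecD]⟩,
          fun j => ⟨2 * b j, by simp [hb j, uVecD]⟩,
          ⟨(∑ i, a i) + (∑ j, b j) + k * z, ?_⟩⟩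
        rw [hsum1, hsum2]
        have : (m : ℚ) = k + k := by exact_mod_cast hk
        push_cast [this]
        ring
  · -- odd case
    intro hmo
    obtain ⟨k, hk⟩ := hmo
    rw [lemW m n hm1]
    ext p
    simp only [Set.mem_inter_iff, Set.mem_smul_set]
    constructor
    · rintro ⟨⟨q, ⟨hmu, hlam⟩, rfl⟩, hPhi⟩
      rcases hlam with hint | hhalf
      · choose c hc using hint
        choose b hb using hmu
        exact ⟨fun i => ⟨c i, by simp [hc i]⟩, fun j => ⟨b j, by simp [hb j]⟩⟩
      · exfalso
        choose c hc using hhalf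
        choose b hb using hmu
        obtain ⟨-, -, z, hz⟩ := hPhi
        have hsum1 : (∑ i, ((2:ℚ) • q).1 i) = 2 * (∑ i, (c i : ℚ)) + m := by
          rw [show (∑ i, ((2:ℚ) • q).1 i) = ∑ i : Fin m, (2 * (c i : ℚ) + 1) from
            Finset.sum_congr rfl (fun i _ => by simp [hc i]; ring)]
          rw [Finset.sum_add_distrib, ← Finset.mul_sum]
          simp [Finset.card_univ]
        have hsum2 : (∑ j, ((2:ℚ) • q).2 j) = 2 * (∑ j, (b j : ℚ)) := by
          rw [show (∑ j, ((2:ℚ) • q).2 j) = ∑ j : Fin n, (2 * (b j : ℚ)) from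
            Finset.sum_congr rfl (fun j _ => by simp [hb j])]
          rw [← Finset.mul_sum]
        rw [hsum1, hsum2] at hz
        have hmint : (m : ℤ) = 2 * (z - (∑ i, c i) - (∑ j, b j)) := by
          have : (m : ℚ) = 2 * ((z:ℚ) - (∑ i, (c i:ℚ)) - (∑ j, (b j:ℚ))) := by
            linarith
          exact_mod_cast this
        omega
    · rintro ⟨h1, h2⟩
      choose a ha using h1
      choose b hb using h2
      have hmem : ((fun i => (a i : ℚ), fun j => (b j : ℚ)) :
          (Fin m → ℚ) × (Fin n → ℚ)) ∈ weightLatticeD m n :=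
        ⟨fun j => ⟨b j, rfl⟩, Or.inl fun i => ⟨a i, rfl⟩⟩
      have hp : p = (2:ℚ) • ((fun i => (a i : ℚ), fun j => (b j : ℚ)) :
          (Fin m → ℚ) × (Fin n → ℚ)) := by
        ext i
        · simp [ha i]
        · simp [hb i]
      constructor
      · exact ⟨_, hmem, hp.symm⟩
      · refine ⟨fun i => ⟨2 * a i, by rw [ha i]; push_cast; ring⟩,
          fun j => ⟨2 * b j, by rw [hb j]; push_cast; ring⟩,
          ⟨(∑ i, a i) + (∑ j, b j), ?_⟩⟩
        have h1' : (∑ i, p.1 i) = 2 * (∑ i, (a i : ℚ)) := by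
          rw [show (∑ i, p.1 i) = ∑ i : Fin m, (2 * (a i : ℚ)) from
            Finset.sum_congr rfl (fun i _ => ha i), ← Finset.mul_sum]
        have h2' : (∑ j, p.2 j) = 2 * (∑ j, (b j : ℚ)) := by
          rw [show (∑ j, p.2 j) = ∑ j : Fin n, (2 * (b j : ℚ)) from
            Finset.sum_congr rfl (fun j _ => hb j), ← Finset.mul_sum]
        rw [h1', h2']
        push_cast
        ring
end

section
/- Let k be a field of characteristic 0. Identify mα_1 + nα_2 with (m, n) ∈ ℤ², define the bilinear form B : ℤ² × ℤ² → ℤ by B((m, n), (m′, n′)) = 2mm′ − mn′ − m′n (so B(α_1, α_1) = 2, B(α_1, α_2) = B(α_2, α_1) = −1, B(α_2, α_2) = 0), define the involution s : ℤ² → ℤ² by s(m, n) = (n − m, n), and let A = {(0, 1), (1, 1), (0, −1), (−1, −1)} (the isotropic roots ±α_2, ±(α_1 + α_2)). Let 𝒮 be the set of all finitely supported functions a : ℤ² → k such that: (i) the support of a is contained in {(m, n) : n is even}; (ii) a(s(μ)) = a(μ) for all μ ∈ ℤ²; (iii) for every α ∈ A and every ν ∈ ℤ² with B(ν, α) ≠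 0, Σ_{j ∈ ℤ} a(ν + jα) = 0. Then for all integers k_1 ≥ k_2, setting λ = (k_1, 2k_2) and t = k_1 − k_2, the function a = δ_λ − δ_{λ−(0,2)} − δ_{λ−(2,2)} + δ_{λ−(2,4)} + δ_{λ−(2t,0)} − δ_{λ−(2t,2)} − δ_{λ−(2t+2,2)} + δ_{λ−(2t+2,4)} belongs to 𝒮, where δ_μ denotes the function that is 1 at μ and 0 elsewhere and the sum of the eight signed indicator functions is taken in the space of functions ℤ² → k (coefficients of coinciding points add). -/
/-- The bilinear form of type `A(1,0)` in the basis `α₁, α₂`: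
`B((m,n),(m',n')) = 2mm' - mn' - m'n`. -/
def Bform (μ α : ℤ × ℤ) : ℤ := 2 * μ.1 * α.1 - μ.1 * α.2 - α.1 * μ.2

/-- The simple reflection `s_{α₁}` : `s(m, n) = (n - m, n)`. -/
def sRefl (μ : ℤ × ℤ) : ℤ × ℤ := (μ.2 - μ.1, μ.2)

/-- The isotropic roots `±α₂, ±(α₁+α₂)` of `A(1,0)`. -/
def isoRoots : Set (ℤ × ℤ) := {(0, 1), (1, 1), (0, -1), (-1, -1)}

/-- The set `(U⁰_ev)^W_sup` for `A(1,0)`: finitely supported `a : ℤ² → k` supported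
on `{(m,n) : n even}`, `W`-invariant, with vanishing coefficient sums along cosets
`ν + ℤα` of each isotropic root `α` with `B(ν,α) ≠ 0`. -/
def supInv (k : Type*) [Field k] : Set ((ℤ × ℤ) →₀ k) :=
  {a | (∀ μ ∈ a.support, Even μ.2) ∧ (∀ μ, a (sRefl μ) = a μ) ∧
    (∀ α ∈ isoRoots, ∀ ν : ℤ × ℤ, Bform ν α ≠ 0 → ∑ᶠ j : ℤ, a (ν + j • α) = 0)}

open Function
open scoped Classical

/-- `sRefl` as an equivalence (it is an involution). -/
def sEquiv : (ℤ × ℤ) ≃ (ℤ × ℤ) where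
  toFun := sRefl
  invFun := sRefl
  left_inv μ := by simp [sRefl]
  right_inv μ := by simp [sRefl]

section helpers
variable {k : Type*} [Field k]

lemma inj_line (ν α : ℤ × ℤ) (hα : α.2 ≠ 0) : Injective fun j : ℤ => ν + j • α := by
  intro x y hxy
  have h2 : (ν + x • α).2 = (ν + y • α).2 := congrArg Prod.snd hxy
  simp only [Prod.snd_add, Prod.smul_snd, smul_eq_mul] at h2
  have := mul_right_cancel₀ hα (by linarith : x * α.2 = y * α.2)
  exact this

lemma supp_single_line (p ν α : ℤ × ℤ) (c : k) (he : Injective fun j : ℤ => ν + j • α) :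
    (Function.support fun j : ℤ => (Finsupp.single p c) (ν + j • α)).Finite := by
  have hsub : (Function.support fun j : ℤ => (Finsupp.single p c) (ν + j • α)) ⊆
      {j : ℤ | ν + j • α = p} := by
    intro j hj
    simp only [Function.mem_support, Finsupp.single_apply] at hj
    by_contra hc
    exact hj (if_neg (fun h => hc h.symm))
  refine Set.Finite.subset ?_ hsub
  apply Set.Subsingleton.finite
  intro x hx y hy
  exact he (hx.trans hy.symm)

lemma finsum_single_line (p ν α : ℤ × ℤ) (c : k) (he : Injective fun j : ℤ => ν + j • α) :
    ∑ᶠ j : ℤ, (Finsupp.single p c) (ν + j • α) =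
      if ∃ j : ℤ, ν + j • α = p then c else 0 := by
  split_ifs with hex
  · obtain ⟨j0, hj0⟩ := hex
    rw [finsum_eq_single _ j0]
    · rw [hj0, Finsupp.single_apply, if_pos rfl]
    · intro x hx
      rw [Finsupp.single_apply, if_neg]
      intro hc
      exact hx (he (show ν + x • α = ν + j0 • α from hc.symm.trans hj0.symm))
  · apply finsum_eq_zero_of_forall_eq_zero
    intro j
    rw [Finsupp.single_apply, if_neg]
    exact fun hc => hex ⟨j, hc.symm⟩

lemma mem_line_vert (ν p : ℤ × ℤ) (ε : ℤ) (hε : ε = 1 ∨ ε = -1) :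
    (∃ j : ℤ, ν + j • ((0 : ℤ), ε) = p) ↔ ν.1 = p.1 := by
  constructor
  · rintro ⟨j, rfl⟩
    simp
  · intro h1
    refine ⟨(p.2 - ν.2) * ε, ?_⟩
    rw [Prod.ext_iff]
    rcases hε with rfl | rfl <;>
      simp only [Prod.smul_mk, smul_eq_mul, Prod.fst_add, Prod.snd_add, mul_zero, mul_one] <;>
      constructor <;> omega

lemma mem_line_diag (ν p : ℤ × ℤ) (ε : ℤ) (hε : ε = 1 ∨ ε = -1) :
    (∃ j : ℤ, ν + j • ((ε : ℤ), ε) = p) ↔ ν.2 - ν.1 = p.2 - p.1 := by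
  constructor
  · rintro ⟨j, rfl⟩
    simp only [Prod.smul_mk, smul_eq_mul, Prod.fst_add, Prod.snd_add]
    ring
  · intro h1
    refine ⟨(p.1 - ν.1) * ε, ?_⟩
    rw [Prod.ext_iff]
    rcases hε with rfl | rfl <;>
      simp only [Prod.smul_mk, smul_eq_mul, Prod.fst_add, Prod.snd_add, mul_one] <;>
      constructor <;> omega

lemma finsum_eight (ν α p1 p2 p3 p4 p5 p6 p7 p8 : ℤ × ℤ)
    (he : Injective fun j : ℤ => ν + j • α) :
    ∑ᶠ j : ℤ, (Finsupp.single p1 (1 : k) - Finsupp.single p2 1 - Finsupp.single p3 1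
      + Finsupp.single p4 1 + Finsupp.single p5 1 - Finsupp.single p6 1
      - Finsupp.single p7 1 + Finsupp.single p8 1 : (ℤ × ℤ) →₀ k) (ν + j • α) =
    (if ∃ j : ℤ, ν + j • α = p1 then (1 : k) else 0)
    - (if ∃ j : ℤ, ν + j • α = p2 then 1 else 0)
    - (if ∃ j : ℤ, ν + j • α = p3 then 1 else 0)
    + (if ∃ j : ℤ, ν + j • α = p4 then 1 else 0)
    + (if ∃ j : ℤ, ν + j • α = p5 then 1 else 0)
    - (if ∃ j : ℤ, ν + j • α = p6 then 1 else 0)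
    - (if ∃ j : ℤ, ν + j • α = p7 then 1 else 0)
    + (if ∃ j : ℤ, ν + j • α = p8 then 1 else 0) := by
  have h1 := supp_single_line p1 ν α (1 : k) he
  have h2 := supp_single_line p2 ν α (1 : k) he
  have h3 := supp_single_line p3 ν α (1 : k) he
  have h4 := supp_single_line p4 ν α (1 : k) he
  have h5 := supp_single_line p5 ν α (1 : k) he
  have h6 := supp_single_line p6 ν α (1 : k) he
  have h7 := supp_single_line p7 ν α (1 : k) he
  have h8 := supp_single_line p8 ν α (1 : k) he
  simp only [Finsupp.coe_add, Finsupp.coe_sub, Pi.add_apply, Pi.sub_apply]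
  have h12 := (h1.union h2).subset (Function.support_sub _ _)
  have h13 := (h12.union h3).subset (Function.support_sub _ _)
  have h14 := (h13.union h4).subset (Function.support_add _ _)
  have h15 := (h14.union h5).subset (Function.support_add _ _)
  have h16 := (h15.union h6).subset (Function.support_sub _ _)
  have h17 := (h16.union h7).subset (Function.support_sub _ _)
  rw [finsum_add_distrib h17 h8, finsum_sub_distrib h16 h7, finsum_sub_distrib h15 h6,
    finsum_add_distrib h14 h5, finsum_add_distrib h13 h4, finsum_sub_distrib h12 h3,
    finsum_sub_distrib h1 h2,
    finsum_single_line p1 ν α (1 : k) he, finsum_single_line p2 ν α (1 : k) he,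
    finsum_single_line p3 ν α (1 : k) he, finsum_single_line p4 ν α (1 : k) he,
    finsum_single_line p5 ν α (1 : k) he, finsum_single_line p6 ν α (1 : k) he,
    finsum_single_line p7 ν α (1 : k) he, finsum_single_line p8 ν α (1 : k) he]

end helpers

set_option maxHeartbeats 4000000 in
/-- For all integers `k₁ ≥ k₂`, with `λ = (k₁, 2k₂)` and `t = k₁ - k₂`, the element
`δ_λ - δ_{λ-(0,2)} - δ_{λ-(2,2)} + δ_{λ-(2,4)} + δ_{λ-(2t,0)} - δ_{λ-(2t,2)}
 - δ_{λ-(2t+2,2)} + δ_{λ-(2t+2,4)}` belongs to `(U⁰_ev)^W_sup`. -/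
theorem stmt9 (k : Type*) [Field k] [CharZero k] (k1 k2 : ℤ) (h : k2 ≤ k1) :
    (Finsupp.single ((k1, 2 * k2) : ℤ × ℤ) (1 : k)
      - Finsupp.single ((k1, 2 * k2) - (0, 2)) 1
      - Finsupp.single ((k1, 2 * k2) - (2, 2)) 1
      + Finsupp.single ((k1, 2 * k2) - (2, 4)) 1
      + Finsupp.single ((k1, 2 * k2) - (2 * (k1 - k2), 0)) 1
      - Finsupp.single ((k1, 2 * k2) - (2 * (k1 - k2), 2)) 1
      - Finsupp.single ((k1, 2 * k2) - (2 * (k1 - k2) + 2, 2)) 1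
      + Finsupp.single ((k1, 2 * k2) - (2 * (k1 - k2) + 2, 4)) 1) ∈ supInv k := by
  refine ⟨?_, ?_, ?_⟩
  · -- evenness of support
    intro μ hμ
    rw [Finsupp.mem_support_iff] at hμ
    by_contra hodd
    apply hμ
    rw [Int.not_even_iff] at hodd
    simp only [Finsupp.coe_add, Finsupp.coe_sub, Pi.add_apply, Pi.sub_apply,
      Finsupp.single_apply, Prod.mk_sub_mk, Prod.ext_iff]
    split_ifs <;> first | omega | norm_num
  · -- W-invariance
    intro μ
    have hd : ∀ b : (ℤ × ℤ) →₀ k, Finsupp.equivMapDomain sEquiv b = Finsupp.domCongr sEquiv b :=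
      fun _ => rfl
    have key : Finsupp.equivMapDomain sEquiv
        (Finsupp.single ((k1, 2 * k2) : ℤ × ℤ) (1 : k)
          - Finsupp.single ((k1, 2 * k2) - (0, 2)) 1
          - Finsupp.single ((k1, 2 * k2) - (2, 2)) 1
          + Finsupp.single ((k1, 2 * k2) - (2, 4)) 1
          + Finsupp.single ((k1, 2 * k2) - (2 * (k1 - k2), 0)) 1
          - Finsupp.single ((k1, 2 * k2) - (2 * (k1 - k2), 2)) 1
          - Finsupp.single ((k1, 2 * k2) - (2 * (k1 - k2) + 2, 2)) 1
          + Finsupp.single ((k1, 2 * k2) - (2 * (k1 - k2) + 2, 4)) 1) =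
        (Finsupp.single ((k1, 2 * k2) : ℤ × ℤ) (1 : k)
          - Finsupp.single ((k1, 2 * k2) - (0, 2)) 1
          - Finsupp.single ((k1, 2 * k2) - (2, 2)) 1
          + Finsupp.single ((k1, 2 * k2) - (2, 4)) 1
          + Finsupp.single ((k1, 2 * k2) - (2 * (k1 - k2), 0)) 1
          - Finsupp.single ((k1, 2 * k2) - (2 * (k1 - k2), 2)) 1
          - Finsupp.single ((k1, 2 * k2) - (2 * (k1 - k2) + 2, 2)) 1
          + Finsupp.single ((k1, 2 * k2) - (2 * (k1 - k2) + 2, 4)) 1) := by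
      rw [hd]
      simp only [map_add, map_sub, Finsupp.domCongr_apply, Finsupp.equivMapDomain_single,
        Prod.mk_sub_mk, sEquiv, Equiv.coe_fn_mk, sRefl]
      have e1 : ((2 * k2 - k1 : ℤ), (2 * k2 : ℤ))
          = ((k1 - 2 * (k1 - k2) : ℤ), (2 * k2 - 0 : ℤ)) := by
        rw [Prod.mk.injEq]; exact ⟨by ring, by ring⟩
      have e2 : ((2 * k2 - 2 - (k1 - 0) : ℤ), (2 * k2 - 2 : ℤ))
          = ((k1 - (2 * (k1 - k2) + 2) : ℤ), (2 * k2 - 2 : ℤ)) := by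
        rw [Prod.mk.injEq]; exact ⟨by ring, by ring⟩
      have e3 : ((2 * k2 - 2 - (k1 - 2) : ℤ), (2 * k2 - 2 : ℤ))
          = ((k1 - 2 * (k1 - k2) : ℤ), (2 * k2 - 2 : ℤ)) := by
        rw [Prod.mk.injEq]; exact ⟨by ring, by ring⟩
      have e4 : ((2 * k2 - 4 - (k1 - 2) : ℤ), (2 * k2 - 4 : ℤ))
          = ((k1 - (2 * (k1 - k2) + 2) : ℤ), (2 * k2 - 4 : ℤ)) := by
        rw [Prod.mk.injEq]; exact ⟨by ring, by ring⟩
      have e5 : ((2 * k2 - 0 - (k1 - 2 * (k1 - k2)) : ℤ), (2 * k2 - 0 : ℤ))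
          = ((k1 : ℤ), (2 * k2 : ℤ)) := by
        rw [Prod.mk.injEq]; exact ⟨by ring, by ring⟩
      have e6 : ((2 * k2 - 2 - (k1 - 2 * (k1 - k2)) : ℤ), (2 * k2 - 2 : ℤ))
          = ((k1 - 2 : ℤ), (2 * k2 - 2 : ℤ)) := by
        rw [Prod.mk.injEq]; exact ⟨by ring, by ring⟩
      have e7 : ((2 * k2 - 2 - (k1 - (2 * (k1 - k2) + 2)) : ℤ), (2 * k2 - 2 : ℤ))
          = ((k1 - 0 : ℤ), (2 * k2 - 2 : ℤ)) := by
        rw [Prod.mk.injEq]; exact ⟨by ring, by ring⟩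
      have e8 : ((2 * k2 - 4 - (k1 - (2 * (k1 - k2) + 2)) : ℤ), (2 * k2 - 4 : ℤ))
          = ((k1 - 2 : ℤ), (2 * k2 - 4 : ℤ)) := by
        rw [Prod.mk.injEq]; exact ⟨by ring, by ring⟩
      rw [e1, e2, e3, e4, e5, e6, e7, e8]
      abel
    have happ := DFunLike.congr_fun key μ
    rw [Finsupp.equivMapDomain_apply] at happ
    have hsymm : sEquiv.symm μ = sRefl μ := rfl
    rw [hsymm] at happ
    exact happ
  · -- coset sums
    intro α hα ν _
    have hα' : α = ((0 : ℤ), (1 : ℤ)) ∨ α = (1, 1) ∨ α = (0, -1) ∨ α = (-1, -1) := by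
      simpa [isoRoots] using hα
    rcases hα' with rfl | rfl | rfl | rfl
    · rw [finsum_eight _ _ _ _ _ _ _ _ _ _ (inj_line _ _ (by norm_num))]
      simp only [mem_line_vert _ _ 1 (Or.inl rfl), Prod.mk_sub_mk, Prod.fst_sub]
      split_ifs <;> first | omega | norm_num
    · rw [finsum_eight _ _ _ _ _ _ _ _ _ _ (inj_line _ _ (by norm_num))]
      simp only [mem_line_diag _ _ 1 (Or.inl rfl), Prod.mk_sub_mk, Prod.fst_sub, Prod.snd_sub]
      split_ifs <;> first | omega | norm_num
    · rw [finsum_eight _ _ _ _ _ _ _ _ _ _ (inj_line _ _ (by norm_num))]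
      simp only [mem_line_vert _ _ (-1) (Or.inr rfl), Prod.mk_sub_mk, Prod.fst_sub]
      split_ifs <;> first | omega | norm_num
    · rw [finsum_eight _ _ _ _ _ _ _ _ _ _ (inj_line _ _ (by norm_num))]
      simp only [mem_line_diag _ _ (-1) (Or.inr rfl), Prod.mk_sub_mk, Prod.fst_sub, Prod.snd_sub]
      split_ifs <;> first | omega | norm_num
end
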